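/- A continuous linear functional T : L¹([0,1];ℝ) → ℝ satisfies T(𝟙) = 1 and T(γ(f,g)) = (T(f) + T(g))/2 for all f, g ∈ L¹([0,1];ℝ) if and only if T(f) = ∫_{[0,1]} f for all f ∈ L¹([0,1];ℝ). In particular, the Lebesgue integral is the unique continuous linear functional on L¹([0,1];ℝ) with these two properties. -/

import Mathlib

/-!
Subtracting the integral, it suffices to show that a continuous functional `D` on `L¹[0,1]` with
`D 𝟙 = 0` and `D (γ f g) = (D f + D g) / 2` vanishes. Juxtaposition acts on indicators of `[0, a)` by
`γ(𝟙_[0,a), 0) = 𝟙_[0,a/2)` and `γ(𝟙, 𝟙_[0,a)) = 𝟙_[0,(a+1)/2)`, so the set of `a ∈ [0,1]` with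
`D 𝟙_[0,a) = 0` contains `0` and `1` and is stable under `a ↦ a/2` and `a ↦ (a+1)/2`. It contains
all dyadic rationals, and being closed (`a ↦ 𝟙_[0,a)` is continuous in `L¹`) it is all of `[0,1]`.
The π-λ theorem extends `D = 0` to all indicators, and density of simple functions to all of `L¹`.
Conversely, the integral has both properties by the substitutions `x ↦ 2x` and `x ↦ 2x - 1`.
-/

open MeasureTheory

/-- Lebesgue measure restricted to `[0,1]`. -/
noncomputable def μ01 : Measure ℝ := volume.restrict (Set.Icc 0 1)

/-- The space `L¹([0,1]; ℝ)`. -/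
abbrev L1 : Type := Lp ℝ 1 μ01

/-- `γ : L1 → L1 → L1` is the juxtaposition operation: `γ f g` agrees a.e. with
`x ↦ f (2x)` on `[0, 1/2)` and with `x ↦ g (2x − 1)` on `[1/2, 1]`. -/
def IsJux (γ : L1 → L1 → L1) : Prop :=
  ∀ f g : L1,
    (∀ᵐ x ∂μ01, x ∈ Set.Ico (0 : ℝ) (1 / 2) → γ f g x = f (2 * x)) ∧
    (∀ᵐ x ∂μ01, x ∈ Set.Icc (1 / 2 : ℝ) 1 → γ f g x = g (2 * x - 1))

/-- `one : L1` is the class of the constant function `1`. -/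
def IsOne (one : L1) : Prop := (one : ℝ → ℝ) =ᵐ[μ01] fun _ => (1 : ℝ)


open Set Filter Topology
open scoped symmDiff

namespace MeasureTheory

section IndicatorConstLp

variable {α F : Type*} {m : MeasurableSpace α} {μ : Measure α} {p : ENNReal}

theorem indicatorConstLp_eq_smul_one {s : Set α} (hs : MeasurableSet s) (hμs : μ s ≠ ⊤) (c : ℝ) :
    indicatorConstLp p hs hμs c = c • indicatorConstLp p hs hμs 1 := by
  ext1
  filter_upwards [indicatorConstLp_coeFn (c := c), indicatorConstLp_coeFn (c := (1 : ℝ)),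
    Lp.coeFn_smul c (indicatorConstLp p hs hμs (1 : ℝ))] with x hc h1 hsmul
  rw [hc, hsmul, Pi.smul_apply, h1]
  by_cases hx : x ∈ s <;> simp [hx]

variable [IsFiniteMeasure μ] [Fact (1 ≤ p)]

theorem tendsto_indicatorConstLp_of_monotone (hp : p ≠ ⊤) {s : ℕ → Set α}
    (hs : ∀ n, MeasurableSet (s n)) (hmono : Monotone s) (c : ℝ) :
    Tendsto (fun n ↦ indicatorConstLp p (hs n) (measure_ne_top μ _) c) atTop
      (𝓝 (indicatorConstLp p (MeasurableSet.iUnion hs) (measure_ne_top μ _) c)) := by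
  refine tendsto_indicatorConstLp_set hp ?_
  have hsymm : ∀ n, s n ∆ ⋃ i, s i = (⋃ i, s i) \ s n := fun n ↦ by
    rw [Set.symmDiff_def, Set.sdiff_eq_empty.mpr (Set.subset_iUnion s n), Set.empty_union]
  simp only [hsymm]
  have := tendsto_measure_iInter_atTop (μ := μ) (s := fun n ↦ (⋃ i, s i) \ s n)
    (fun n ↦ ((MeasurableSet.iUnion hs).diff (hs n)).nullMeasurableSet)
    (fun m n hmn ↦ Set.sdiff_subset_sdiff_right (hmono hmn)) ⟨0, measure_ne_top μ _⟩
  rwa [← Set.sdiff_iUnion, Set.sdiff_self, measure_empty] at this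

variable [NormedAddCommGroup F] [NormedSpace ℝ F]

theorem map_indicatorConstLp_eq_zero_of_isPiSystem {S : Set (Set α)}
    (h_eq : m = MeasurableSpace.generateFrom S) (h_inter : IsPiSystem S) (hp : p ≠ ⊤)
    (D : Lp ℝ p μ →L[ℝ] F)
    (hS : ∀ s (hs : MeasurableSet s), s ∈ S → D (indicatorConstLp p hs (measure_ne_top μ s) 1) = 0)
    (huniv : D (indicatorConstLp p .univ (measure_ne_top μ _) 1) = 0) (s : Set α)
    (hs : MeasurableSet s) : D (indicatorConstLp p hs (measure_ne_top μ s) 1) = 0 := by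
  induction s, hs using MeasurableSpace.induction_on_inter h_eq h_inter with
  | empty => simp
  | basic t ht => exact hS t _ ht
  | compl t htm ht =>
    have hunion := indicatorConstLp_disjoint_union (p := p) htm htm.compl (measure_ne_top μ _)
      (measure_ne_top μ _) disjoint_compl_right (1 : ℝ)
    calc D (indicatorConstLp p htm.compl _ 1)
        = D (indicatorConstLp p (htm.union htm.compl) (measure_ne_top μ _) 1) := by
          rw [hunion, map_add, ht, zero_add]
      _ = 0 := by convert huniv using 3; simp
  | iUnion f hdisj hfm hf =>
    have hAm (n : ℕ) : MeasurableSet (accumulate f n) := .biUnion (to_countable _) fun i _ ↦ hfm i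
    have hA (n : ℕ) : D (indicatorConstLp p (hAm n) (measure_ne_top μ _) 1) = 0 := by
      induction n with
      | zero => convert hf 0 using 3; simp
      | succ n ih =>
        have hunion := indicatorConstLp_disjoint_union (p := p) (hAm n) (hfm (n + 1))
          (measure_ne_top μ _) (measure_ne_top μ _)
          (disjoint_accumulate hdisj n.lt_add_one) (1 : ℝ)
        calc D (indicatorConstLp p (hAm (n + 1)) _ 1)
            = D (indicatorConstLp p ((hAm n).union (hfm (n + 1))) (measure_ne_top μ _) 1) := by
              congr 2; simp
          _ = 0 := by rw [hunion, map_add, ih, hf, add_zero]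
    have hlim := (D.continuous.tendsto _).comp
      (tendsto_indicatorConstLp_of_monotone hp hAm monotone_accumulate 1)
    have hU := tendsto_nhds_unique hlim (by simpa only [Function.comp_def, hA] using tendsto_const_nhds)
    convert hU using 3; simp

theorem Lp.eq_zero_of_map_indicatorConstLp (hp : p ≠ ⊤) (D : Lp ℝ p μ →L[ℝ] F)
    (h : ∀ s (hs : MeasurableSet s), D (indicatorConstLp p hs (measure_ne_top μ s) 1) = 0) :
    D = 0 := by
  ext f
  induction f using Lp.induction hp with
  | indicatorConst c hs hμs =>
    rw [Lp.simpleFunc.coe_indicatorConst, indicatorConstLp_eq_smul_one, map_smul, h, smul_zero]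
    rfl
  | add _ _ _ hf hg => rw [map_add, hf, hg, ← map_add]
  | isClosed => exact isClosed_eq D.continuous (0 : Lp ℝ p μ →L[ℝ] F).continuous

end IndicatorConstLp

end MeasureTheory

theorem Icc_subset_of_isClosed_of_halves {Z : Set ℝ} (hZ : IsClosed Z) (h0 : 0 ∈ Z) (h1 : 1 ∈ Z)
    (hleft : ∀ a ∈ Z, a / 2 ∈ Z) (hright : ∀ a ∈ Z, (a + 1) / 2 ∈ Z) : Icc 0 1 ⊆ Z := by
  have hdyadic (n : ℕ) : ∀ k : ℕ, k ≤ 2 ^ n → (k / 2 ^ n : ℝ) ∈ Z := by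
    induction n with
    | zero =>
      intro k hk
      interval_cases k <;> simpa
    | succ n ih =>
      intro k hk
      rcases le_or_gt k (2 ^ n) with hkn | hkn
      · convert hleft _ (ih k hkn) using 1
        rw [pow_succ, div_div]
      · obtain ⟨j, rfl⟩ := Nat.exists_eq_add_of_le hkn.le
        convert hright _ (ih j (by rw [pow_succ] at hk; omega)) using 1
        push_cast
        field_simp
        ring
  intro a ⟨ha0, ha1⟩
  have hlim : Tendsto (fun n : ℕ ↦ (⌊a * 2 ^ n⌋₊ / 2 ^ n : ℝ)) atTop (𝓝 a) :=
    (tendsto_nat_floor_mul_div_atTop ha0).comp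
      (tendsto_pow_atTop_atTop_of_one_lt one_lt_two)
  refine hZ.mem_of_tendsto hlim (Eventually.of_forall fun n ↦ hdyadic n _ ?_)
  exact Nat.floor_le_of_le (by push_cast; exact mul_le_of_le_one_left (by positivity) ha1)

instance : IsProbabilityMeasure μ01 := ⟨by simp [μ01]⟩

theorem ae_mem_Ico_μ01 : ∀ᵐ x ∂μ01, x ∈ Ico (0 : ℝ) 1 := by
  rw [μ01, ← Measure.restrict_congr_set Ico_ae_eq_Icc]
  exact ae_restrict_mem measurableSet_Ico

theorem ae_comp_of_quasiMeasurePreserving {u v : ℝ → ℝ} (huv : u =ᵐ[μ01] v) {φ : ℝ → ℝ}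
    (hφ : Measure.QuasiMeasurePreserving φ volume volume) :
    ∀ᵐ x ∂μ01, φ x ∈ Icc 0 1 → u (φ x) = v (φ x) :=
  ae_restrict_of_ae (hφ.ae ((ae_restrict_iff' measurableSet_Icc).1 huv))

theorem IsJux.eq_of_ae {γ : L1 → L1 → L1} (hγ : IsJux γ) {f g h : L1}
    (hleft : ∀ᵐ x ∂μ01, x ∈ Ico (0 : ℝ) (1 / 2) → h x = f (2 * x))
    (hright : ∀ᵐ x ∂μ01, x ∈ Icc (1 / 2 : ℝ) 1 → h x = g (2 * x - 1)) :
    γ f g = h := by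
  obtain ⟨hγleft, hγright⟩ := hγ f g
  ext1
  filter_upwards [hleft, hright, hγleft, hγright, ae_mem_Ico_μ01] with x hl hr hγl hγr hx
  rcases lt_or_ge x (1 / 2) with hx2 | hx2
  · rw [hγl ⟨hx.1, hx2⟩, hl ⟨hx.1, hx2⟩]
  · rw [hγr ⟨hx2, hx.2.le⟩, hr ⟨hx2, hx.2.le⟩]

/-- The class of `𝟙_[0,a)` in `L1`: `Iio a` and `Ico 0 a` agree `μ01`-a.e. -/
noncomputable def indIio (a : ℝ) : L1 :=
  indicatorConstLp 1 (measurableSet_Iio : MeasurableSet (Iio a)) (measure_ne_top μ01 _) 1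

theorem coeFn_indIio (a : ℝ) : ⇑(indIio a) =ᵐ[μ01] fun x ↦ if x < a then 1 else 0 := by
  filter_upwards [indicatorConstLp_coeFn (p := 1) (c := (1 : ℝ))
    (hs := (measurableSet_Iio : MeasurableSet (Iio a))) (hμs := measure_ne_top μ01 _)] with x hx
  simp [indIio, hx, Set.indicator_apply]

theorem indIio_eq_of_forall {a b : ℝ} (h : ∀ x ∈ Ico (0 : ℝ) 1, x < a ↔ x < b) :
    indIio a = indIio b := by
  refine (indicatorConstLp_inj _ _ _ _ one_ne_zero).2 ?_
  filter_upwards [ae_mem_Ico_μ01] with x hx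
  exact propext (h x hx)

theorem indIio_zero : indIio 0 = 0 := by
  rw [indIio, ← indicatorConstLp_empty (p := 1) (μ := μ01) (c := (1 : ℝ)),
    indicatorConstLp_inj _ _ _ _ one_ne_zero]
  filter_upwards [ae_mem_Ico_μ01] with x hx
  exact propext (iff_of_false (not_lt.2 hx.1) id)

theorem indIio_one : indIio 1 = indicatorConstLp 1 .univ (measure_ne_top μ01 _) (1 : ℝ) := by
  rw [indIio, indicatorConstLp_inj _ _ _ _ one_ne_zero]
  filter_upwards [ae_mem_Ico_μ01] with x hx
  exact propext (iff_of_true hx.2 trivial)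

theorem IsOne.eq_indicatorConstLp_univ {one : L1} (hone : IsOne one) :
    one = indicatorConstLp 1 .univ (measure_ne_top μ01 _) (1 : ℝ) := by
  ext1
  filter_upwards [hone, indicatorConstLp_coeFn (p := 1) (c := (1 : ℝ)) (hs := MeasurableSet.univ)
    (hμs := measure_ne_top μ01 _)] with x h1 h2
  rw [h1, h2, Set.indicator_univ]

theorem continuous_indIio : Continuous indIio := by
  refine continuous_indicatorConstLp_set (μ := μ01) (s := Iio) ENNReal.one_ne_top fun a ↦ ?_
  have hsub (y : ℝ) : Iio y ∆ Iio a ⊆ uIcc y a := by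
    rintro x (⟨hxy, hxa⟩ | ⟨hxa, hxy⟩)
    · exact mem_uIcc.2 (Or.inr ⟨not_lt.1 hxa, le_of_lt hxy⟩)
    · exact mem_uIcc.2 (Or.inl ⟨not_lt.1 hxy, le_of_lt hxa⟩)
  have hvol : Tendsto (fun y ↦ ENNReal.ofReal |a - y|) (𝓝 a) (𝓝 0) := by
    simpa using ENNReal.tendsto_ofReal
      ((continuous_const.sub continuous_id).abs.tendsto (f := fun y : ℝ ↦ |a - y|) a)
  refine tendsto_of_tendsto_of_tendsto_of_le_of_le tendsto_const_nhds hvol (fun _ ↦ zero_le)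
    fun y ↦ ?_
  calc μ01 (Iio y ∆ Iio a) ≤ volume (Iio y ∆ Iio a) := Measure.restrict_le_self _
    _ ≤ volume (uIcc y a) := measure_mono (hsub y)
    _ = ENNReal.ofReal |a - y| := Real.volume_interval

theorem quasiMeasurePreserving_const_mul {c : ℝ} (hc : c ≠ 0) :
    Measure.QuasiMeasurePreserving (fun x ↦ c * x) volume volume :=
  Measure.quasiMeasurePreserving_smul volume hc

theorem quasiMeasurePreserving_mul_sub {c : ℝ} (hc : c ≠ 0) (d : ℝ) :
    Measure.QuasiMeasurePreserving (fun x ↦ c * x - d) volume volume :=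
  (measurePreserving_sub_right volume d).quasiMeasurePreserving.comp
    (quasiMeasurePreserving_const_mul hc)

section Jux

variable {γ : L1 → L1 → L1} {one : L1}

theorem IsJux.apply_indIio_zero (hγ : IsJux γ) {a : ℝ} (ha : a ≤ 1) :
    γ (indIio a) 0 = indIio (a / 2) := by
  apply hγ.eq_of_ae
  · filter_upwards [coeFn_indIio (a / 2), ae_comp_of_quasiMeasurePreserving (coeFn_indIio a)
      (quasiMeasurePreserving_const_mul two_ne_zero)] with x hx h2x hmem
    rw [hx, h2x ⟨by linarith [hmem.1], by linarith [hmem.2]⟩]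
    simp only [show 2 * x < a ↔ x < a / 2 by constructor <;> intro <;> linarith]
  · filter_upwards [coeFn_indIio (a / 2), ae_comp_of_quasiMeasurePreserving (Lp.coeFn_zero ℝ 1 μ01)
      (quasiMeasurePreserving_mul_sub two_ne_zero 1)] with x hx h2x hmem
    rw [hx, h2x ⟨by linarith [hmem.1], by linarith [hmem.2]⟩, if_neg (by linarith [hmem.1])]
    rfl

theorem IsJux.apply_one_indIio (hγ : IsJux γ) (hone : IsOne one) {a : ℝ} (ha : 0 ≤ a) :
    γ one (indIio a) = indIio ((a + 1) / 2) := by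
  apply hγ.eq_of_ae
  · filter_upwards [coeFn_indIio ((a + 1) / 2), ae_comp_of_quasiMeasurePreserving hone
      (quasiMeasurePreserving_const_mul two_ne_zero)] with x hx h2x hmem
    rw [hx, h2x ⟨by linarith [hmem.1], by linarith [hmem.2]⟩, if_pos (by linarith [hmem.2])]
  · filter_upwards [coeFn_indIio ((a + 1) / 2), ae_comp_of_quasiMeasurePreserving (coeFn_indIio a)
      (quasiMeasurePreserving_mul_sub two_ne_zero 1)] with x hx h2x hmem
    rw [hx, h2x ⟨by linarith [hmem.1], by linarith [hmem.2]⟩]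
    simp only [show 2 * x - 1 < a ↔ x < (a + 1) / 2 by constructor <;> intro <;> linarith]

end Jux

theorem IsJux.eq_zero_of_map_eq_average {γ : L1 → L1 → L1} (hγ : IsJux γ) {one : L1}
    (hone : IsOne one) (D : L1 →L[ℝ] ℝ) (hD1 : D one = 0) (hDγ : ∀ f g, D (γ f g) = (D f + D g) / 2) : D = 0 := by
  have hIcc : Icc 0 1 ⊆ {a | a ∈ Icc (0 : ℝ) 1 ∧ D (indIio a) = 0} := by
    refine Icc_subset_of_isClosed_of_halves
      (isClosed_Icc.inter (isClosed_eq (D.continuous.comp continuous_indIio) continuous_const))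
      ⟨left_mem_Icc.2 zero_le_one, by rw [indIio_zero, map_zero]⟩
      ⟨right_mem_Icc.2 zero_le_one, by rw [indIio_one, ← hone.eq_indicatorConstLp_univ, hD1]⟩
      (fun a ⟨⟨ha0, ha1⟩, ha⟩ ↦ ⟨⟨by linarith, by linarith⟩, ?_⟩)
      (fun a ⟨⟨ha0, ha1⟩, ha⟩ ↦ ⟨⟨by linarith, by linarith⟩, ?_⟩)
    · rw [← hγ.apply_indIio_zero ha1, hDγ, ha, map_zero, add_zero, zero_div]
    · rw [← hγ.apply_one_indIio hone ha0, hDγ, ha, hD1, add_zero, zero_div]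
  have hIio (a : ℝ) : D (indIio a) = 0 := by
    have hclamp : max 0 (min a 1) ∈ Icc (0 : ℝ) 1 :=
      ⟨le_max_left _ _, max_le zero_le_one (min_le_right _ _)⟩
    rw [indIio_eq_of_forall (b := max 0 (min a 1)) fun x hx ↦ by
      simp only [lt_max_iff, lt_min_iff, hx.2, and_true, not_lt.2 hx.1, false_or]]
    exact (hIcc hclamp).2
  refine Lp.eq_zero_of_map_indicatorConstLp ENNReal.one_ne_top D
    (map_indicatorConstLp_eq_zero_of_isPiSystem
      (BorelSpace.measurable_eq.trans (borel_eq_generateFrom_Iio ℝ)) isPiSystem_Iio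
      ENNReal.one_ne_top D ?_ ?_)
  · rintro s hs ⟨a, rfl⟩
    exact hIio a
  · rw [← hone.eq_indicatorConstLp_univ, hD1]

theorem integral_μ01_eq_intervalIntegral (f : ℝ → ℝ) : ∫ x, f x ∂μ01 = ∫ x in (0 : ℝ)..1, f x := by
  rw [intervalIntegral.integral_of_le zero_le_one, μ01, integral_Icc_eq_integral_Ioc]

theorem IsOne.integral {one : L1} (hone : IsOne one) : ∫ x, one x ∂μ01 = 1 := by
  simp [integral_congr_ae hone]

theorem IsJux.integral {γ : L1 → L1 → L1} (hγ : IsJux γ) (f g : L1) :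
    ∫ x, γ f g x ∂μ01 = ((∫ x, f x ∂μ01) + ∫ x, g x ∂μ01) / 2 := by
  obtain ⟨hleft, hright⟩ := hγ f g
  have hint : IntervalIntegrable (γ f g) volume 0 1 := by
    rw [intervalIntegrable_iff_integrableOn_Icc_of_le zero_le_one]
    exact L1.integrable_coeFn (γ f g)
  have hleft' : ∫ x in (0 : ℝ)..1 / 2, γ f g x = ∫ x in (0 : ℝ)..1 / 2, f (2 * x) := by
    refine intervalIntegral.integral_congr_ae ?_
    filter_upwards [(ae_restrict_iff' measurableSet_Icc).1 hleft, volume.ae_ne (1 / 2)]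
      with x hx hx2 hmem
    rw [uIoc_of_le (by norm_num)] at hmem
    exact hx ⟨hmem.1.le, by linarith [hmem.2]⟩ ⟨hmem.1.le, lt_of_le_of_ne hmem.2 hx2⟩
  have hright' : ∫ x in (1 / 2 : ℝ)..1, γ f g x = ∫ x in (1 / 2 : ℝ)..1, g (2 * x - 1) := by
    refine intervalIntegral.integral_congr_ae ?_
    filter_upwards [(ae_restrict_iff' measurableSet_Icc).1 hright] with x hx hmem
    rw [uIoc_of_le (by norm_num)] at hmem
    exact hx ⟨by linarith [hmem.1], hmem.2⟩ ⟨hmem.1.le, hmem.2⟩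
  have hhalf : (1 / 2 : ℝ) ∈ uIcc 0 1 := by rw [uIcc_of_le zero_le_one]; norm_num
  simp only [integral_μ01_eq_intervalIntegral]
  rw [← intervalIntegral.integral_add_adjacent_intervals
      (hint.mono_set (uIcc_subset_uIcc left_mem_uIcc hhalf))
      (hint.mono_set (uIcc_subset_uIcc hhalf right_mem_uIcc)),
    hleft', hright', intervalIntegral.integral_comp_mul_left _ two_ne_zero,
    intervalIntegral.integral_comp_mul_sub _ two_ne_zero]
  norm_num
  ring

/-- a continuous linear functional `T` on `L¹([0,1];ℝ)` satisfies
`T 𝟙 = 1` and `T (γ f g) = (T f + T g)/2` iff `T` is the Lebesgue integral; in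
particular the Lebesgue integral is the unique such functional. -/
theorem stmt_11 (γ : L1 → L1 → L1) (hγ : IsJux γ)
    (one : L1) (hone : IsOne one)
    (T : L1 →L[ℝ] ℝ) :
    (T one = 1 ∧ ∀ f g : L1, T (γ f g) = (T f + T g) / 2) ↔
      (∀ f : L1, T f = ∫ x, f x ∂μ01) := by
  have hCLM (f : L1) : L1.integralCLM f = ∫ x, f x ∂μ01 :=
    (L1.integral_eq f).symm.trans (L1.integral_eq_integral f)
  constructor
  · rintro ⟨hT1, hTγ⟩ f
    have hD := hγ.eq_zero_of_map_eq_average hone (T - L1.integralCLM)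
      (by rw [sub_apply, hCLM, hone.integral, hT1, sub_self])
      fun f g ↦ by simp only [sub_apply, hCLM, hγ.integral, hTγ]; ring
    rw [← hCLM, ← sub_eq_zero, ← sub_apply, hD, zero_apply]
  · intro hT
    exact ⟨by rw [hT, hone.integral], fun f g ↦ by rw [hT, hT, hT, hγ.integral]⟩
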